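/- Suppose each user k ∈ {1,...,K} requires T_k = ⌈L_k N / (ρ_k B τ)⌉ connection slots within its first D_k time slots, each slot-subchannel pair can serve at most one user, and each user uses at most one subchannel per slot. If Σ_k T_k ≤ S · min_k D_k and T_k ≤ D_k for all k, then a feasible assignment α satisfying constraints (C1), (C2), and (C7) exists. -/
import Mathlib

theorem exists_schedule {K S : ℕ} (hS : 0 < S) (Tk Dk : Fin K → ℕ) (M : ℕ)
    (hM : ∀ k, M ≤ Dk k) (hTD : ∀ k, Tk k ≤ Dk k) (hsum : ∑ k, Tk k ≤ S * M) :
    ∃ α : Fin K → Fin S → ℕ → Bool,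
      (∀ s t, (Finset.univ.filter fun k => α k s t).card ≤ 1) ∧
      (∀ k t, (Finset.univ.filter fun s => α k s t).card ≤ 1) ∧
      (∀ k, Tk k ≤ ∑ t ∈ Finset.range (Dk k),
        (Finset.univ.filter fun s => α k s t).card) := by
  rcases Nat.eq_zero_or_pos M with hM0 | hMpos
  · -- M = 0 : all Tk = 0, empty schedule
    have hT0 : ∀ k, Tk k = 0 := by
      intro k
      have h1 : ∑ j, Tk j = 0 := le_antisymm (by simpa [hM0] using hsum) (Nat.zero_le _)
      exact Finset.sum_eq_zero_iff.mp h1 k (Finset.mem_univ k)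
    refine ⟨fun _ _ _ => false, ?_, ?_, ?_⟩ <;> simp [hT0]
  · -- big users and small users
    set Bset : Finset (Fin K) := Finset.univ.filter (fun k => M < Tk k) with hBset
    set b : ℕ := Bset.card with hb
    set rank : Fin K → ℕ := fun k =>
      if h : k ∈ Bset then (Bset.equivFin ⟨k, h⟩ : Fin b).val else 0 with hrank
    set P : Fin K → ℕ := fun k =>
      ∑ k' ∈ Finset.univ.filter (fun k' => Tk k' ≤ M ∧ k' < k), Tk k' with hP
    set Ssum : ℕ := ∑ k ∈ Finset.univ.filter (fun k => Tk k ≤ M), Tk k with hSsum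
    -- rank is < b for big users
    have hrank_lt : ∀ k, M < Tk k → rank k < b := by
      intro k hk
      have hmem : k ∈ Bset := by simp [hBset, hk]
      simp only [hrank, dif_pos hmem]
      exact (Bset.equivFin ⟨k, hmem⟩).isLt
    -- rank is injective on big users
    have hrank_inj : ∀ k1 k2, M < Tk k1 → M < Tk k2 → rank k1 = rank k2 → k1 = k2 := by
      intro k1 k2 h1 h2 heq
      have hm1 : k1 ∈ Bset := by simp [hBset, h1]
      have hm2 : k2 ∈ Bset := by simp [hBset, h2]
      simp only [hrank, dif_pos hm1, dif_pos hm2] at heq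
      have := Bset.equivFin.injective (Fin.ext heq)
      exact Subtype.mk_eq_mk.mp this
    -- sum of big users is at least b * (M+1)
    have hBsum : b * (M + 1) ≤ ∑ k ∈ Bset, Tk k := by
      calc b * (M+1) = ∑ _k ∈ Bset, (M+1) := by rw [Finset.sum_const, smul_eq_mul, mul_comm]
        _ ≤ ∑ k ∈ Bset, Tk k := Finset.sum_le_sum (by
            intro k hk
            have : M < Tk k := by simpa [hBset] using hk
            omega)
    have hsplit : ∑ k ∈ Bset, Tk k + Ssum = ∑ k, Tk k := by
      rw [hSsum, hBset]
      have := Finset.sum_filter_add_sum_filter_not (Finset.univ : Finset (Fin K))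
        (fun k => M < Tk k) Tk
      rw [← this]
      congr 1
      apply Finset.sum_congr _ (fun _ _ => rfl)
      apply Finset.filter_congr
      intro k _
      simp [Nat.not_lt]
    -- b < S
    have hbS : b < S := by
      by_contra h
      push_neg at h
      have h1 : S * (M+1) ≤ b * (M+1) := Nat.mul_le_mul_right _ h
      have h2 : b * (M+1) ≤ S * M := le_trans hBsum (by omega)
      nlinarith
    -- total small sum bound
    have hSsum_le : Ssum + b * M ≤ S * M := by
      have h1 := hBsum
      have h2 : b * (M + 1) = b * M + b := by ring
      omega
    have hSb : Ssum ≤ (S - b) * M := by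
      have : (S - b) * M = S * M - b * M := by rw [Nat.sub_mul]
      omega
    -- prefix sum facts
    have hPle : ∀ k, Tk k ≤ M → P k + Tk k ≤ Ssum := by
      intro k hk
      have hsub : insert k (Finset.univ.filter (fun k' => Tk k' ≤ M ∧ k' < k))
          ⊆ Finset.univ.filter (fun k' => Tk k' ≤ M) := by
        intro x hx
        rcases Finset.mem_insert.mp hx with rfl | hx
        · simp [hk]
        · simp only [Finset.mem_filter] at hx ⊢
          exact ⟨hx.1, hx.2.1⟩
      have hnot : k ∉ Finset.univ.filter (fun k' => Tk k' ≤ M ∧ k' < k) := by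
        simp
      calc P k + Tk k
          = ∑ k' ∈ insert k (Finset.univ.filter (fun k' => Tk k' ≤ M ∧ k' < k)), Tk k' := by
            rw [Finset.sum_insert hnot]; simp only [hP]; omega
        _ ≤ Ssum := Finset.sum_le_sum_of_subset hsub
    have hPdisj : ∀ k1 k2 : Fin K, Tk k1 ≤ M → Tk k2 ≤ M → k1 < k2 →
        P k1 + Tk k1 ≤ P k2 := by
      intro k1 k2 h1 h2 hlt
      have hsub : insert k1 (Finset.univ.filter (fun k' => Tk k' ≤ M ∧ k' < k1))
          ⊆ Finset.univ.filter (fun k' => Tk k' ≤ M ∧ k' < k2) := by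
        intro x hx
        rcases Finset.mem_insert.mp hx with rfl | hx
        · simp [h1, hlt]
        · simp only [Finset.mem_filter] at hx ⊢
          exact ⟨hx.1, hx.2.1, lt_trans hx.2.2 hlt⟩
      have hnot : k1 ∉ Finset.univ.filter (fun k' => Tk k' ≤ M ∧ k' < k1) := by
        simp
      calc P k1 + Tk k1
          = ∑ k' ∈ insert k1 (Finset.univ.filter (fun k' => Tk k' ≤ M ∧ k' < k1)), Tk k' := by
            rw [Finset.sum_insert hnot]; simp only [hP]; omega
        _ ≤ P k2 := Finset.sum_le_sum_of_subset hsub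
    -- the assignment
    set α : Fin K → Fin S → ℕ → Bool := fun k s t =>
      if M < Tk k then decide (((s : ℕ) = rank k) ∧ t < Tk k)
      else decide (t < M ∧ b ≤ (s : ℕ) ∧ P k ≤ ((s : ℕ) - b) * M + t ∧
        ((s : ℕ) - b) * M + t < P k + Tk k) with hα
    have hbig : ∀ (k : Fin K) (s : Fin S) (t : ℕ), M < Tk k →
        (α k s t = true ↔ (((s : ℕ) = rank k) ∧ t < Tk k)) := by
      intro k s t h
      simp only [hα, if_pos h, decide_eq_true_eq]
    have hsmallc : ∀ (k : Fin K) (s : Fin S) (t : ℕ), Tk k ≤ M →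
        (α k s t = true ↔ (t < M ∧ b ≤ (s : ℕ) ∧ P k ≤ ((s : ℕ) - b) * M + t ∧
          ((s : ℕ) - b) * M + t < P k + Tk k)) := by
      intro k s t h
      simp only [hα, if_neg (Nat.not_lt.mpr h), decide_eq_true_eq]
    refine ⟨α, ?_, ?_, ?_⟩
    · -- (C1)
      intro s t
      rw [Finset.card_le_one]
      intro k1 hk1 k2 hk2
      rw [Finset.mem_filter] at hk1 hk2
      replace hk1 := hk1.2
      replace hk2 := hk2.2
      by_cases h1 : M < Tk k1 <;> by_cases h2 : M < Tk k2
      · rw [hbig k1 s t h1] at hk1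
        rw [hbig k2 s t h2] at hk2
        exact hrank_inj k1 k2 h1 h2 (hk1.1 ▸ hk2.1)
      · rw [hbig k1 s t h1] at hk1
        rw [hsmallc k2 s t (Nat.not_lt.mp h2)] at hk2
        have := hrank_lt k1 h1
        omega
      · rw [hsmallc k1 s t (Nat.not_lt.mp h1)] at hk1
        rw [hbig k2 s t h2] at hk2
        have := hrank_lt k2 h2
        omega
      · rw [hsmallc k1 s t (Nat.not_lt.mp h1)] at hk1
        rw [hsmallc k2 s t (Nat.not_lt.mp h2)] at hk2
        rcases lt_trichotomy k1 k2 with hlt | heq | hlt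
        · have := hPdisj k1 k2 (Nat.not_lt.mp h1) (Nat.not_lt.mp h2) hlt
          omega
        · exact heq
        · have := hPdisj k2 k1 (Nat.not_lt.mp h2) (Nat.not_lt.mp h1) hlt
          omega
    · -- (C2)
      intro k t
      rw [Finset.card_le_one]
      intro s1 hs1 s2 hs2
      rw [Finset.mem_filter] at hs1 hs2
      replace hs1 := hs1.2
      replace hs2 := hs2.2
      by_cases h : M < Tk k
      · rw [hbig k s1 t h] at hs1
        rw [hbig k s2 t h] at hs2
        exact Fin.ext (hs1.1.trans hs2.1.symm)
      · rw [hsmallc k s1 t (Nat.not_lt.mp h)] at hs1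
        rw [hsmallc k s2 t (Nat.not_lt.mp h)] at hs2
        rcases lt_trichotomy ((s1 : ℕ)) ((s2 : ℕ)) with hlt | heq | hlt
        · exfalso
          have hstep : ((s1 : ℕ) - b) * M + M ≤ ((s2 : ℕ) - b) * M := by
            have h1 : ((s1 : ℕ) - b + 1) * M ≤ ((s2 : ℕ) - b) * M :=
              Nat.mul_le_mul_right M (by omega)
            have h2 : ((s1 : ℕ) - b + 1) * M = ((s1 : ℕ) - b) * M + M := by ring
            omega
          omega
        · exact Fin.ext heq
        · exfalso
          have hstep : ((s2 : ℕ) - b) * M + M ≤ ((s1 : ℕ) - b) * M := by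
            have h1 : ((s2 : ℕ) - b + 1) * M ≤ ((s1 : ℕ) - b) * M :=
              Nat.mul_le_mul_right M (by omega)
            have h2 : ((s2 : ℕ) - b + 1) * M = ((s2 : ℕ) - b) * M + M := by ring
            omega
          omega
    · -- (C7)
      intro k
      by_cases hk : M < Tk k
      · -- big user: dedicated subchannel rank k, times 0,...,Tk k - 1
        have hsS : rank k < S := lt_trans (hrank_lt k hk) hbS
        calc Tk k = ∑ _t ∈ Finset.range (Tk k), 1 := by simp
          _ ≤ ∑ t ∈ Finset.range (Tk k),
              (Finset.univ.filter fun s => α k s t = true).card := by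
            apply Finset.sum_le_sum
            intro t ht
            rw [Finset.mem_range] at ht
            refine Finset.card_pos.mpr ⟨⟨rank k, hsS⟩, ?_⟩
            rw [Finset.mem_filter]
            exact ⟨Finset.mem_univ _, (hbig k _ t hk).mpr ⟨rfl, ht⟩⟩
          _ ≤ ∑ t ∈ Finset.range (Dk k),
              (Finset.univ.filter fun s => α k s t = true).card :=
            Finset.sum_le_sum_of_subset (Finset.range_subset_range.mpr (hTD k))
      · -- small user
        have hk' : Tk k ≤ M := Nat.not_lt.mp hk
        set f : ℕ → ℕ := fun j => (P k + j) % M with hf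
        have hkey : ∀ j1 j2, j1 ≤ j2 → j2 < Tk k → f j1 = f j2 → j1 = j2 := by
          intro j1 j2 hle hlt heq
          have hmod : (P k + j1) ≡ (P k + j2) [MOD M] := heq
          have hdvd : M ∣ (P k + j2) - (P k + j1) :=
            (Nat.modEq_iff_dvd' (by omega)).mp hmod
          have hsmalldiff : (P k + j2) - (P k + j1) < M := by omega
          have hz : (P k + j2) - (P k + j1) = 0 :=
            Nat.eq_zero_of_dvd_of_lt hdvd hsmalldiff
          omega
        have hinj : Set.InjOn f (Finset.range (Tk k)) := by
          intro j1 h1 j2 h2 heq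
          simp only [Finset.coe_range, Set.mem_Iio] at h1 h2
          rcases le_total j1 j2 with hle | hle
          · exact hkey j1 j2 hle h2 heq
          · exact (hkey j2 j1 hle h1 heq.symm).symm
        have hwit : ∀ j, j < Tk k → ∃ s : Fin S, α k s (f j) = true := by
          intro j hj
          have hiS : P k + j < (S - b) * M := by
            have := hPle k hk'
            omega
          have hdiv : (P k + j) / M < S - b := (Nat.div_lt_iff_lt_mul hMpos).mpr hiS
          refine ⟨⟨b + (P k + j) / M, by omega⟩, ?_⟩
          rw [hsmallc k _ _ hk']
          have hdm := Nat.div_add_mod (P k + j) M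
          refine ⟨Nat.mod_lt _ hMpos, by simp, ?_, ?_⟩
          · simp only [Nat.add_sub_cancel_left, hf]
            have : (P k + j) / M * M = M * ((P k + j) / M) := mul_comm _ _
            omega
          · simp only [Nat.add_sub_cancel_left, hf]
            have : (P k + j) / M * M = M * ((P k + j) / M) := mul_comm _ _
            omega
        calc Tk k = (Finset.range (Tk k)).card := (Finset.card_range _).symm
          _ = ((Finset.range (Tk k)).image f).card :=
            (Finset.card_image_of_injOn hinj).symm
          _ = ∑ _t ∈ (Finset.range (Tk k)).image f, 1 := by
            rw [Finset.card_eq_sum_ones]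
          _ ≤ ∑ t ∈ (Finset.range (Tk k)).image f,
              (Finset.univ.filter fun s => α k s t = true).card := by
            apply Finset.sum_le_sum
            intro t ht
            rw [Finset.mem_image] at ht
            obtain ⟨j, hj, rfl⟩ := ht
            rw [Finset.mem_range] at hj
            obtain ⟨s, hs⟩ := hwit j hj
            exact Finset.card_pos.mpr ⟨s, Finset.mem_filter.mpr ⟨Finset.mem_univ _, hs⟩⟩
          _ ≤ ∑ t ∈ Finset.range (Dk k),
              (Finset.univ.filter fun s => α k s t = true).card := by
            apply Finset.sum_le_sum_of_subset
            intro t ht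
            rw [Finset.mem_image] at ht
            obtain ⟨j, _, rfl⟩ := ht
            rw [Finset.mem_range]
            exact lt_of_lt_of_le (Nat.mod_lt _ hMpos) (hM k)


/-- Feasibility of the scheduling problem: if each user k needs
T_k = ⌈L_k N / (ρ_k B τ)⌉ slots within its first D_k slots, T_k ≤ D_k, and
Σ_k T_k ≤ S · min_k D_k, then an assignment satisfying (C1), (C2), (C7) exists. -/
theorem scheduling_feasibility (K S : ℕ) (hK : 0 < K) (hS : 0 < S)
    (L : Fin K → ℕ) (N B τ : ℝ) (ρ : Fin K → ℝ)
    (hN : 0 < N) (hB : 0 < B) (hτ : 0 < τ) (hρ : ∀ k, 0 < ρ k)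
    (Tk Dk : Fin K → ℕ)
    (hTk : ∀ k, Tk k = ⌈(L k : ℝ) * N / (ρ k * B * τ)⌉₊)
    (hTD : ∀ k, Tk k ≤ Dk k)
    (hsum : ∑ k, Tk k ≤ S * Finset.univ.inf' ⟨⟨0, hK⟩, Finset.mem_univ _⟩ Dk) :
    ∃ α : Fin K → Fin S → ℕ → Bool,
      (∀ s t, (Finset.univ.filter fun k => α k s t).card ≤ 1) ∧
      (∀ k t, (Finset.univ.filter fun s => α k s t).card ≤ 1) ∧
      (∀ k, Tk k ≤ ∑ t ∈ Finset.range (Dk k),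
        (Finset.univ.filter fun s => α k s t).card) :=
  exists_schedule hS Tk Dk
    (Finset.univ.inf' ⟨⟨0, hK⟩, Finset.mem_univ _⟩ Dk)
    (fun k => Finset.inf'_le Dk (Finset.mem_univ k)) hTD hsum
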